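/- arXiv:1702.08405 — 3 statements merged into one kernel-verified Lean document; each statement's English description precedes it below -/
import Mathlib

section
/- For any ATL+ path formula Φ, the number of truth swap points of Φ along any infinite path is at most the number of temporal relative atoms of Φ. That is, if At(Φ) is the set of relative atoms of Φ and λ is an infinite path in a concurrent game model, then TSN(Φ,λ) ≤ |{Ψ ∈ At(Φ) : Ψ is a temporal formula}|. -/
/-- A concurrent game model: agents, states, actions, an action availability
function `d` (nonempty at each agent/state), a transition function `o`, and a
valuation `v` of proposition symbols (indexed by `ℕ`). -/
structure CGM (Agt St Act : Type) where
  d : Agt → St → Set Act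
  d_ne : ∀ a q, (d a q).Nonempty
  o : St → (Agt → Act) → St
  v : ℕ → Set St

/-- `Λ` is an infinite path in `M`: each transition is generated by an
admissible action profile. -/
def CGM.IsPath {Agt St Act : Type} (M : CGM Agt St Act) (Λ : ℕ → St) : Prop :=
  ∀ n, ∃ α : Agt → Act, (∀ a, α a ∈ M.d a (Λ n)) ∧ Λ (n + 1) = M.o (Λ n) α

/-- ATL⁺ path formulae over an abstract type `σ` of state formulae (covering
proposition symbols and strategic formulae `⟨⟨A⟩⟩Ψ`, whose truth at a state is
prefix-independent): Boolean combinations of state formulae, `X φ` and `φ U ψ`. -/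
inductive PathFormula (σ : Type) where
  | state : σ → PathFormula σ
  | neg : PathFormula σ → PathFormula σ
  | or : PathFormula σ → PathFormula σ → PathFormula σ
  | next : σ → PathFormula σ
  | until_ : σ → σ → PathFormula σ

/-- Finite path semantics: truth of a path formula on the prefix of `Λ` of
length `n` (i.e. the finite path `Λ[0] … Λ[n]`, with `n` transitions), given a
satisfaction relation `sat` for state formulae. -/
def finTruth {σ St : Type} (sat : σ → St → Prop) (Λ : ℕ → St) :
    PathFormula σ → ℕ → Prop
  | .state φ, _ => sat φ (Λ 0)
  | .neg Φ, n => ¬ finTruth sat Λ Φ n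
  | .or Φ Ψ, n => finTruth sat Λ Φ n ∨ finTruth sat Λ Ψ n
  | .next φ, n => 1 ≤ n ∧ sat φ (Λ 1)
  | .until_ φ ψ, n => ∃ i ≤ n, sat ψ (Λ i) ∧ ∀ j < i, sat φ (Λ j)

/-- The set of temporal relative atoms of a path formula: its `X`-atoms
(inl) and `U`-atoms (inr). -/
def tempAtoms {σ : Type} [DecidableEq σ] : PathFormula σ → Finset (σ ⊕ σ × σ)
  | .state _ => ∅
  | .neg Φ => tempAtoms Φ
  | .or Φ Ψ => tempAtoms Φ ∪ tempAtoms Ψ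
  | .next φ => {Sum.inl φ}
  | .until_ φ ψ => {Sum.inr (φ, ψ)}

/-- The truth swap points of `Φ` on `Λ`: indices `i ≥ 1` where the
finite-prefix truth value of `Φ` changes between the prefixes of lengths
`i - 1` and `i`. -/
def swapPoints {σ St : Type} (sat : σ → St → Prop) (Λ : ℕ → St)
    (Φ : PathFormula σ) : Set ℕ :=
  {i : ℕ | 1 ≤ i ∧ ¬ (finTruth sat Λ Φ (i - 1) ↔ finTruth sat Λ Φ i)}

/-!
A temporal atom `X φ` or `φ U ψ` is monotone along a growing prefix: once true, it stays true.
So it swaps truth at most once. The state atoms of `Φ` are evaluated at `Λ 0` only and the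
connectives are truth-functional, so at every swap point of `Φ` one of its temporal atoms swaps.
-/

theorem Monotone.subsingleton_swaps {p : ℕ → Prop} (hp : Monotone p) :
    {i | 1 ≤ i ∧ ¬(p (i - 1) ↔ p i)}.Subsingleton := by
  have rises : ∀ {i}, ¬(p (i - 1) ↔ p i) → ¬p (i - 1) ∧ p i := fun {i} _ => by
    have : p (i - 1) → p i := hp (Nat.sub_le i 1)
    tauto
  have no_two_swaps :
      ∀ {i j}, i < j → ¬(p (i - 1) ↔ p i) → ¬(p (j - 1) ↔ p j) → False :=
    fun {i j} hij hswap_i hswap_j =>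
      (rises hswap_j).1 (hp (by omega : i ≤ j - 1) (rises hswap_i).2)
  rintro i ⟨-, hswap_i⟩ j ⟨-, hswap_j⟩
  rcases lt_trichotomy i j with hij | rfl | hji
  · exact (no_two_swaps hij hswap_i hswap_j).elim
  · rfl
  · exact (no_two_swaps hji hswap_j hswap_i).elim

theorem Finset.finite_biUnion_of_subsingleton {ι α : Type*} (t : Finset ι)
    {s : ι → Set α} (hs : ∀ i ∈ t, (s i).Subsingleton) : (⋃ i ∈ t, s i).Finite :=
  t.finite_toSet.biUnion fun i hi => (hs i hi).finite

theorem Finset.ncard_biUnion_le_card_of_subsingleton {ι α : Type*} (t : Finset ι)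
    {s : ι → Set α} (hs : ∀ i ∈ t, (s i).Subsingleton) :
    (⋃ i ∈ t, s i).ncard ≤ t.card :=
  calc (⋃ i ∈ t, s i).ncard
      ≤ ∑ i ∈ t, (s i).ncard := t.set_ncard_biUnion_le s
    _ ≤ ∑ _i ∈ t, 1 :=
      Finset.sum_le_sum fun i hi => (Set.ncard_le_one (hs i hi).finite).2 (hs i hi)
    _ = t.card := by rw [Finset.card_eq_sum_ones]

def PathFormula.ofTempAtom {σ : Type} : σ ⊕ σ × σ → PathFormula σ
  | .inl φ => .next φ
  | .inr (φ, ψ) => .until_ φ ψ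

section

variable {σ St : Type} (sat : σ → St → Prop) (Λ : ℕ → St)

theorem finTruth_ofTempAtom_monotone (a : σ ⊕ σ × σ) :
    Monotone (finTruth sat Λ (.ofTempAtom a)) := by
  intro m n hmn
  rcases a with φ | ⟨φ, ψ⟩
  · exact fun ⟨hm, hφ⟩ => ⟨hm.trans hmn, hφ⟩
  · exact fun ⟨i, him, hψ, hφ⟩ => ⟨i, him.trans hmn, hψ, hφ⟩

theorem swapPoints_ofTempAtom_subsingleton (a : σ ⊕ σ × σ) :
    (swapPoints sat Λ (.ofTempAtom a)).Subsingleton :=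
  (finTruth_ofTempAtom_monotone sat Λ a).subsingleton_swaps

variable [DecidableEq σ]

theorem finTruth_congr_of_tempAtoms {Φ : PathFormula σ} {m n : ℕ}
    (h : ∀ a ∈ tempAtoms Φ,
      (finTruth sat Λ (.ofTempAtom a) m ↔ finTruth sat Λ (.ofTempAtom a) n)) :
    finTruth sat Λ Φ m ↔ finTruth sat Λ Φ n := by
  induction Φ with
  | state φ => rfl
  | neg Φ ih => exact not_congr (ih h)
  | or Φ Ψ ihΦ ihΨ =>
    exact or_congr (ihΦ fun a ha => h a (Finset.mem_union_left _ ha))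
      (ihΨ fun a ha => h a (Finset.mem_union_right _ ha))
  | next φ => exact h (.inl φ) (Finset.mem_singleton_self _)
  | until_ φ ψ => exact h (.inr (φ, ψ)) (Finset.mem_singleton_self _)

theorem swapPoints_subset_biUnion_tempAtoms (Φ : PathFormula σ) :
    swapPoints sat Λ Φ ⊆ ⋃ a ∈ tempAtoms Φ, swapPoints sat Λ (.ofTempAtom a) := by
  rintro i ⟨hi, hswap⟩
  by_contra hnot
  simp only [Set.mem_iUnion, not_exists] at hnot
  exact hswap (finTruth_congr_of_tempAtoms sat Λ fun a ha => by
    by_contra hswap_a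
    exact hnot a ha ⟨hi, hswap_a⟩)

end

theorem truth_swap_number_le_temporal_atoms_general {St σ : Type}
    [DecidableEq σ] (sat : σ → St → Prop)
    (Λ : ℕ → St) (Φ : PathFormula σ) :
    (swapPoints sat Λ Φ).Finite ∧
    (swapPoints sat Λ Φ).ncard ≤ (tempAtoms Φ).card := by
  have hsub := swapPoints_subset_biUnion_tempAtoms sat Λ Φ
  have hatoms : ∀ a ∈ tempAtoms Φ, (swapPoints sat Λ (.ofTempAtom a)).Subsingleton :=
    fun a _ => swapPoints_ofTempAtom_subsingleton sat Λ a
  have hfin := (tempAtoms Φ).finite_biUnion_of_subsingleton hatoms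
  exact ⟨hfin.subset hsub, (Set.ncard_le_ncard hsub hfin).trans
    ((tempAtoms Φ).ncard_biUnion_le_card_of_subsingleton hatoms)⟩

/-- For any ATL⁺ path formula `Φ` and any infinite path `Λ` in a
CGM, the number of truth swap points of `Φ` along `Λ` is at most the number of
temporal relative atoms of `Φ`:  `TSN(Φ,Λ) ≤ |{Ψ ∈ At(Φ) : Ψ temporal}|`. -/
theorem truth_swap_number_le_temporal_atoms {Agt St Act σ : Type}
    [DecidableEq σ] (M : CGM Agt St Act) (sat : σ → St → Prop)
    (Λ : ℕ → St) (hΛ : M.IsPath Λ) (Φ : PathFormula σ) :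
    (swapPoints sat Λ Φ).Finite ∧
    (swapPoints sat Λ Φ).ncard ≤ (tempAtoms Φ).card :=
  truth_swap_number_le_temporal_atoms_general sat Λ Φ
end

section
/- Finite Büchi games are positionally determined: in a two-player game on a finite directed graph where every vertex has a successor, vertices are partitioned between players 0 and 1, and player 0 wins an infinite play iff some vertex in a designated set F is visited infinitely often, then from every vertex exactly one of the players has a positional winning strategy. -/
/-!
Player 0's winning region is the greatest fixed point `W` of `W ↦ attr₀ (F ∩ cpre₀ W)`, reached
after finitely many steps of the descending iteration `W₀ = V`, `Wₖ₊₁ = attr₀ (F ∩ cpre₀ Wₖ)`.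
From `W`, player 0 follows the attractor strategy towards `F ∩ cpre₀ W` and, once there, moves
back into `W`; so `F` is visited infinitely often. Outside `W`, let the level of a vertex be the
least `k` with `v ∉ Wₖ`. The complement of an attractor is a trap for player 0, so player 1 can
keep the level from increasing, and at a vertex of `F` of level `k + 1`, which is not in
`cpre₀ Wₖ`, player 1 can make it drop; hence `F` is visited finitely often. Both strategies are
positional, and no vertex is won by both players, since the play where each follows their
winning strategy would be won by both.
-/

variable {V : Type}

/-- A positional strategy `σ` for player `i` in a graph game: at every vertex
owned by `i` it selects an edge. -/
def BuchiLegal (E : V → V → Prop) (owner : V → Bool) (i : Bool)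
    (σ : V → V) : Prop :=
  ∀ v, owner v = i → E v (σ v)

/-- A play from `v` consistent with the positional strategy `σ` of player `i`. -/
def BuchiConsistent (E : V → V → Prop) (owner : V → Bool) (i : Bool)
    (σ : V → V) (v : V) (π : ℕ → V) : Prop :=
  π 0 = v ∧ ∀ n, E (π n) (π (n + 1)) ∧ (owner (π n) = i → π (n + 1) = σ (π n))

/-- Player `i` has a positional winning strategy from `v` in the Büchi game
with target set `F` (player `false`, i.e. player 0, wins a play iff `F` is
visited infinitely often). -/
def BuchiPosWinning (E : V → V → Prop) (owner : V → Bool) (F : Set V)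
    (i : Bool) (v : V) : Prop :=
  ∃ σ : V → V, BuchiLegal E owner i σ ∧
    ∀ π : ℕ → V, BuchiConsistent E owner i σ v π →
      ({n : ℕ | π n ∈ F}.Infinite ↔ i = false)

theorem Antitone.finite_setOf_apply_succ_lt {α : Type*} [PartialOrder α] [WellFoundedLT α]
    {f : ℕ → α} (hf : Antitone f) : {n | f (n + 1) < f n}.Finite := by
  obtain ⟨N, hN⟩ := WellFoundedLT.antitone_chain_condition hf
  refine (Set.finite_Iio N).subset fun n hn => ?_
  by_contra hle
  have hNn : N ≤ n := not_lt.mp hle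
  exact (hn : f (n + 1) < f n).ne (by rw [← hN n hNn, ← hN (n + 1) (by omega)])

theorem Set.infinite_of_apply_succ_lt_of_notMem {α : Type*} [Preorder α] [WellFoundedLT α]
    {f : ℕ → α} {S : Set ℕ} (h : ∀ n ∉ S, f (n + 1) < f n) : S.Infinite := by
  intro hS
  obtain ⟨b, hb⟩ := hS.bddAbove
  have hnotMem : ∀ k, b + 1 + k ∉ S := fun k hk => by have := hb hk; omega
  refine not_strictAnti_of_wellFoundedLT (fun k => f (b + 1 + k))
    (strictAnti_nat_of_succ_lt fun k => ?_)
  simpa only [← add_assoc] using h _ (hnotMem k)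

namespace GraphGame

variable (E : V → V → Prop) (owner : V → Bool)

def cpre (i : Bool) (S : Set V) : Set V :=
  {v | (owner v = i → ∃ w, E v w ∧ w ∈ S) ∧ (owner v ≠ i → ∀ w, E v w → w ∈ S)}

/-- `attrLevel i T (n + 1)` is where player `i` can force a visit to `T` within `n` moves. -/
def attrLevel (i : Bool) (T : Set V) : ℕ → Set V
  | 0 => ∅
  | n + 1 => T ∪ cpre E owner i (attrLevel i T n)

def attr (i : Bool) (T : Set V) : Set V :=
  ⋃ n, attrLevel E owner i T n

noncomputable def attrRank (i : Bool) (T : Set V) (v : V) : ℕ :=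
  sInf {n | v ∈ attrLevel E owner i T n}

variable {E owner}

theorem cpre_mono {i : Bool} {S S' : Set V} (h : S ⊆ S') : cpre E owner i S ⊆ cpre E owner i S' :=
  fun _ hv => ⟨fun ho => (hv.1 ho).imp fun _ hw => ⟨hw.1, h hw.2⟩, fun ho w hw => h (hv.2 ho w hw)⟩

theorem compl_cpre (i : Bool) (S : Set V) : (cpre E owner i S)ᶜ = cpre E owner (!i) Sᶜ := by
  ext v
  simp only [cpre, Set.mem_compl_iff]
  cases i <;> cases h : owner v <;> simp [h]

theorem attrLevel_mono_right (i : Bool) {T T' : Set V} (h : T ⊆ T') :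
    ∀ n, attrLevel E owner i T n ⊆ attrLevel E owner i T' n
  | 0 => le_rfl
  | n + 1 => Set.union_subset_union h (cpre_mono (attrLevel_mono_right i h n))

variable (E owner) in
theorem monotone_attrLevel (i : Bool) (T : Set V) : Monotone (attrLevel E owner i T) := by
  refine monotone_nat_of_le_succ fun n => ?_
  induction n with
  | zero => exact Set.empty_subset _
  | succ n ih => exact Set.union_subset_union le_rfl (cpre_mono ih)

theorem attr_mono {i : Bool} {T T' : Set V} (h : T ⊆ T') : attr E owner i T ⊆ attr E owner i T' :=
  Set.iUnion_mono (attrLevel_mono_right i h)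

theorem subset_attr (i : Bool) (T : Set V) : T ⊆ attr E owner i T :=
  fun _ hv => Set.mem_iUnion.mpr ⟨1, Or.inl hv⟩

variable (E owner) in
theorem exists_attr_eq_attrLevel [Finite V] (i : Bool) (T : Set V) :
    ∃ N, attr E owner i T = attrLevel E owner i T N := by
  obtain ⟨N, hN⟩ := WellFoundedGT.monotone_chain_condition ⟨_, monotone_attrLevel E owner i T⟩
  refine ⟨N, (Set.iUnion_subset fun m => ?_).antisymm (Set.subset_iUnion _ N)⟩
  rcases le_total m N with hmN | hNm
  · exact monotone_attrLevel E owner i T hmN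
  · exact (hN m hNm).ge

theorem cpre_attr_subset [Finite V] (i : Bool) (T : Set V) :
    cpre E owner i (attr E owner i T) ⊆ attr E owner i T := by
  obtain ⟨N, hN⟩ := exists_attr_eq_attrLevel E owner i T
  calc cpre E owner i (attr E owner i T) = cpre E owner i (attrLevel E owner i T N) := by rw [hN]
    _ ⊆ attrLevel E owner i T (N + 1) := Set.subset_union_right
    _ ⊆ attr E owner i T := Set.subset_iUnion _ _

theorem mem_cpre_attrRank_lt {i : Bool} {T : Set V} {v : V} (hv : v ∈ attr E owner i T)
    (hvT : v ∉ T) :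
    v ∈ cpre E owner i
      {w | w ∈ attr E owner i T ∧ attrRank E owner i T w < attrRank E owner i T v} := by
  have hmem : v ∈ attrLevel E owner i T (attrRank E owner i T v) :=
    Nat.sInf_mem (Set.mem_iUnion.mp hv)
  obtain ⟨m, hm⟩ : ∃ m, attrRank E owner i T v = m + 1 :=
    Nat.exists_eq_succ_of_ne_zero fun h0 => by rw [h0] at hmem; exact hmem
  rw [hm] at hmem ⊢
  refine cpre_mono (fun w hw => ?_) (hmem.resolve_left hvT)
  exact ⟨Set.mem_iUnion.mpr ⟨m, hw⟩, Nat.lt_succ_of_le (Nat.sInf_le hw)⟩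

theorem exists_legal_strategy_of_forall_mem_cpre (htotal : ∀ v, ∃ w, E v w) {i : Bool}
    {W : Set V} {P : V → V → Prop} (h : ∀ v ∈ W, v ∈ cpre E owner i {w | w ∈ W ∧ P v w}) :
    ∃ σ, BuchiLegal E owner i σ ∧ ∀ v ∈ W, ∀ π, BuchiConsistent E owner i σ v π →
      ∀ n, π n ∈ W ∧ P (π n) (π (n + 1)) := by
  have hmove : ∀ v, ∃ w, E v w ∧ (owner v = i → v ∈ W → w ∈ W ∧ P v w) := by
    intro v
    by_cases hv : owner v = i ∧ v ∈ W
    · obtain ⟨w, hw, hwW⟩ := (h v hv.2).1 hv.1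
      exact ⟨w, hw, fun _ _ => hwW⟩
    · obtain ⟨w, hw⟩ := htotal v
      exact ⟨w, hw, fun ho hvW => absurd ⟨ho, hvW⟩ hv⟩
  choose σ hσ using hmove
  refine ⟨σ, fun v _ => (hσ v).1, fun v hv π ⟨h0, hπ⟩ => ?_⟩
  have hstep : ∀ n, π n ∈ W → π (n + 1) ∈ W ∧ P (π n) (π (n + 1)) := by
    intro n hn
    by_cases ho : owner (π n) = i
    · rw [(hπ n).2 ho]
      exact (hσ (π n)).2 ho hn
    · exact (h (π n) hn).2 ho _ (hπ n).1
  have hW : ∀ n, π n ∈ W := fun n => by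
    induction n with
    | zero => exact h0 ▸ hv
    | succ n ih => exact (hstep n ih).1
  exact fun n => ⟨hW n, (hstep n (hW n)).2⟩

variable {F : Set V}

theorem buchiPosWinning_false_of_eq_attr (htotal : ∀ v, ∃ w, E v w) {W : Set V}
    (hW : W = attr E owner false (F ∩ cpre E owner false W)) {v : V} (hv : v ∈ W) :
    BuchiPosWinning E owner F false v := by
  set T := F ∩ cpre E owner false W
  have hinv : ∀ u ∈ W, u ∈ cpre E owner false
      {w | w ∈ W ∧ (u ∉ T → attrRank E owner false T w < attrRank E owner false T u)} := by
    intro u hu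
    by_cases huT : u ∈ T
    · refine cpre_mono (fun w hw => ?_) huT.2
      exact ⟨hw, fun h => absurd huT h⟩
    · rw [hW] at hu
      refine cpre_mono (fun w hw => ?_) (mem_cpre_attrRank_lt hu huT)
      exact ⟨hW ▸ hw.1, fun _ => hw.2⟩
  obtain ⟨σ, hσ, hplay⟩ := exists_legal_strategy_of_forall_mem_cpre htotal hinv
  refine ⟨σ, hσ, fun π hπ => iff_of_true ?_ rfl⟩
  have hT : {n | π n ∈ T}.Infinite :=
    Set.infinite_of_apply_succ_lt_of_notMem (f := fun n => attrRank E owner false T (π n))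
      fun n => (hplay v hv π hπ n).2
  exact hT.mono fun n hn => hn.1

variable (E owner F)

/-- Descending approximants of player 0's winning region, the greatest fixed point of
`W ↦ attr₀ (F ∩ cpre₀ W)`. -/
def buchiApprox : ℕ → Set V
  | 0 => Set.univ
  | k + 1 => attr E owner false (F ∩ cpre E owner false (buchiApprox k))

/-- The first approximant that misses `v` (junk value `0` when `v` lies in all of them). -/
noncomputable def buchiLevel (v : V) : ℕ :=
  sInf {k | v ∉ buchiApprox E owner F k}

theorem antitone_buchiApprox : Antitone (buchiApprox E owner F) := by
  refine antitone_nat_of_succ_le fun k => ?_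
  induction k with
  | zero => exact Set.subset_univ _
  | succ k ih => exact attr_mono (Set.inter_subset_inter le_rfl (cpre_mono ih))

theorem exists_buchiApprox_eq_attr [Finite V] : ∃ N, buchiApprox E owner F N =
    attr E owner false (F ∩ cpre E owner false (buchiApprox E owner F N)) := by
  obtain ⟨N, hN⟩ := WellFoundedLT.antitone_chain_condition (antitone_buchiApprox E owner F)
  exact ⟨N, hN (N + 1) N.le_succ⟩

variable {E owner F}

theorem mem_cpre_true_buchiLevel [Finite V] {v : V} {k : ℕ} (hv : v ∉ buchiApprox E owner F k) :
    v ∈ cpre E owner true {w | (∃ j, w ∉ buchiApprox E owner F j) ∧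
      buchiLevel E owner F w ≤ buchiLevel E owner F v ∧
      (v ∈ F → buchiLevel E owner F w < buchiLevel E owner F v)} := by
  have hlevel : v ∉ buchiApprox E owner F (buchiLevel E owner F v) :=
    Nat.sInf_mem (s := {j | v ∉ buchiApprox E owner F j}) ⟨k, hv⟩
  obtain ⟨l, hl⟩ : ∃ l, buchiLevel E owner F v = l + 1 :=
    Nat.exists_eq_succ_of_ne_zero fun h0 => by rw [h0] at hlevel; exact hlevel trivial
  have hvl : v ∈ buchiApprox E owner F l := by
    by_contra hvl
    have : buchiLevel E owner F v ≤ l := Nat.sInf_le (s := {j | v ∉ buchiApprox E owner F j}) hvl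
    omega
  rw [hl] at hlevel ⊢
  have hle : ∀ {j w}, w ∉ buchiApprox E owner F j →
      (∃ j, w ∉ buchiApprox E owner F j) ∧ buchiLevel E owner F w ≤ j :=
    fun hw => ⟨⟨_, hw⟩, Nat.sInf_le hw⟩
  by_cases hF : v ∈ F
  · have hout : v ∉ cpre E owner false (buchiApprox E owner F l) :=
      fun hc => hlevel (subset_attr _ _ ⟨hF, hc⟩)
    rw [← Set.mem_compl_iff, compl_cpre] at hout
    refine cpre_mono (fun w hw => ?_) hout
    obtain ⟨hwW, hwl⟩ := hle hw
    exact ⟨hwW, by omega, fun _ => by omega⟩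
  · have hout : v ∉ cpre E owner false (buchiApprox E owner F (l + 1)) :=
      fun hc => hlevel (cpre_attr_subset _ _ hc)
    rw [← Set.mem_compl_iff, compl_cpre] at hout
    refine cpre_mono (fun w hw => ?_) hout
    exact ⟨(hle hw).1, (hle hw).2, fun h => absurd h hF⟩

theorem buchiPosWinning_true_of_notMem_buchiApprox [Finite V] (htotal : ∀ v, ∃ w, E v w)
    {v : V} {k : ℕ} (hv : v ∉ buchiApprox E owner F k) : BuchiPosWinning E owner F true v := by
  obtain ⟨σ, hσ, hplay⟩ := exists_legal_strategy_of_forall_mem_cpre htotal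
    (W := {u | ∃ j, u ∉ buchiApprox E owner F j}) fun u ⟨_, hu⟩ => mem_cpre_true_buchiLevel hu
  refine ⟨σ, hσ, fun π hπ => iff_of_false ?_ Bool.noConfusion⟩
  have hanti : Antitone fun n => buchiLevel E owner F (π n) :=
    antitone_nat_of_succ_le fun n => (hplay v ⟨k, hv⟩ π hπ n).2.1
  exact Set.not_infinite.mpr <| hanti.finite_setOf_apply_succ_lt.subset
    fun n hn => (hplay v ⟨k, hv⟩ π hπ n).2.2 hn

variable (owner) in
def outcome (σ τ : V → V) (v : V) : ℕ → V
  | 0 => v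
  | n + 1 => cond (owner (outcome σ τ v n)) (τ (outcome σ τ v n)) (σ (outcome σ τ v n))

theorem not_buchiPosWinning_false_and_true (v : V) :
    ¬(BuchiPosWinning E owner F false v ∧ BuchiPosWinning E owner F true v) := by
  rintro ⟨⟨σ, hσ, hwin₀⟩, ⟨τ, hτ, hwin₁⟩⟩
  set π := outcome owner σ τ v
  have hedge : ∀ n, E (π n) (π (n + 1)) := fun n => by
    cases ho : owner (π n)
    · simpa [π, outcome, ho] using hσ _ ho
    · simpa [π, outcome, ho] using hτ _ ho
  have h₀ := hwin₀ π ⟨rfl, fun n => ⟨hedge n, fun ho => by simp [π, outcome, ho]⟩⟩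
  have h₁ := hwin₁ π ⟨rfl, fun n => ⟨hedge n, fun ho => by simp [π, outcome, ho]⟩⟩
  simp only [iff_true, Bool.true_eq_false, iff_false] at h₀ h₁
  exact h₁ h₀

end GraphGame

open GraphGame

/-- Finite Büchi games are positionally determined: on a finite
directed graph in which every vertex has a successor, with vertices partitioned
between the two players and a target set `F`, from every vertex exactly one of
the players has a positional winning strategy. -/
theorem finite_buchi_positional_determinacy [Fintype V]
    (E : V → V → Prop) (htotal : ∀ v, ∃ w, E v w)
    (owner : V → Bool) (F : Set V) (v : V) :
    Xor' (BuchiPosWinning E owner F false v) (BuchiPosWinning E owner F true v) := by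
  obtain ⟨N, hN⟩ := exists_buchiApprox_eq_attr E owner F
  by_cases hv : v ∈ buchiApprox E owner F N
  · have h₀ := buchiPosWinning_false_of_eq_attr htotal hN hv
    exact Or.inl ⟨h₀, fun h₁ => not_buchiPosWinning_false_and_true v ⟨h₀, h₁⟩⟩
  · have h₁ := buchiPosWinning_true_of_notMem_buchiApprox htotal hv
    exact Or.inr ⟨h₁, fun h₀ => not_buchiPosWinning_false_and_true v ⟨h₀, h₁⟩⟩
end

section
/- If an infinite game graph where every play either terminates (reaching a terminal position with an assigned winner) or is infinite and then won by a fixed rule assigning the winner based on which player 'moved last among a finite counter of alternations', and the alternation counter is bounded by a fixed n and strictly decreases at each alternation, then the game is determined. Abstractly: a game whose plays are infinite only through a suffix controlled by a single fixed player (who then loses) is equivalent to a game with an auxiliary co-Büchi winning condition, and hence determined. -/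
/-- An abstract transition/evaluation game: positions carry a player to move,
a seeker, and a counter bounded by `N` which is non-increasing along moves and
strictly decreases whenever the seeker changes.  Infinite plays are lost by the
eventually-constant seeker; finite (terminal) positions have an assigned
winner. -/
structure TGame (Pos : Type) where
  move : Pos → Pos → Prop
  turn : Pos → Bool
  seeker : Pos → Bool
  counter : Pos → ℕ
  winner : Pos → Bool
  N : ℕ
  counter_le : ∀ p, counter p ≤ N
  counter_mono : ∀ p q, move p q → counter q ≤ counter p
  counter_swap : ∀ p q, move p q → seeker q ≠ seeker p → counter q < counter p

def TGame.Terminal {Pos : Type} (G : TGame Pos) (p : Pos) : Prop :=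
  ∀ q, ¬ G.move p q

/-- One step of a play in which player `P` follows the positional strategy `σ`. -/
def TGame.Follows {Pos : Type} (G : TGame Pos) (σ : Pos → Pos) (P : Bool)
    (p q : Pos) : Prop :=
  G.move p q ∧ (G.turn p = P → q = σ p)

/-- An infinite play from `p` in which player `P` follows `σ`. -/
def TGame.InfPlay {Pos : Type} (G : TGame Pos) (σ : Pos → Pos) (P : Bool)
    (p : Pos) (π : ℕ → Pos) : Prop :=
  π 0 = p ∧ ∀ n, G.Follows σ P (π n) (π (n + 1))

/-- Player `P` has a winning strategy from `p`: every reachable terminal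
position is won by `P`, and in every infinite consistent play the eventually
constant seeker is not `P` (the player who remains seeker forever loses). -/
def TGame.Winning {Pos : Type} (G : TGame Pos) (P : Bool) (p : Pos) : Prop :=
  ∃ σ : Pos → Pos,
    (∀ r, G.turn r = P → ¬ G.Terminal r → G.move r (σ r)) ∧
    (∀ q, Relation.ReflTransGen (G.Follows σ P) p q →
      G.Terminal q → G.winner q = P) ∧
    (∀ π : ℕ → Pos, G.InfPlay σ P p π →
      ∀ s : Bool, (∃ N₀, ∀ n ≥ N₀, G.seeker (π n) = s) → s ≠ P)

/-!
Counters never increase along a play, so every infinite play eventually stays at one counter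
level, and a play that stays at one level cannot change its seeker. The game is therefore solved
level by level, by recursion on the counter: at level `c` the seeker plays a reachability game
whose targets are the terminal positions it wins and the moves down to lower levels that are
already known to be won by it. Its winning region is a least fixed point, and the ordinal rank of
a position in that fixed point gives a positional strategy for both sides: the seeker lowers the
rank while the level stays the same, the opponent stays outside the fixed point. Hence one of the
two players wins from every position; both cannot win, since the play in which their
strategies meet would have to be won by both.
-/

namespace OrdinalApprox

universe u

variable {α : Type u} (f : Set α →o Set α)

noncomputable def lfpRank (x : α) : Ordinal.{u} := sInf {a | x ∈ lfpApprox f ⊥ a}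

theorem mem_lfp_iff_exists_mem_lfpApprox {x : α} :
    x ∈ f.lfp ↔ ∃ a, x ∈ lfpApprox f ⊥ a :=
  ⟨fun hx => ⟨_, (lfpApprox_ord_eq_lfp f).symm ▸ hx⟩,
    fun ⟨a, hx⟩ => lfpApprox_le_of_mem_fixedPoints f f.isFixedPt_lfp bot_le a hx⟩

theorem mem_apply_setOf_lfpRank_lt {x : α} (hx : x ∈ f.lfp) :
    x ∈ f {y | y ∈ f.lfp ∧ lfpRank f y < lfpRank f x} := by
  have hrank : x ∈ lfpApprox f ⊥ (lfpRank f x) :=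
    csInf_mem ((mem_lfp_iff_exists_mem_lfpApprox f).1 hx)
  rw [lfpApprox] at hrank
  simp only [bot_sup_eq, Set.iSup_eq_iUnion, Set.mem_iUnion, exists_prop] at hrank
  obtain ⟨b, hb, hxb⟩ := hrank
  refine f.mono (fun y hy => ?_) hxb
  exact ⟨(mem_lfp_iff_exists_mem_lfpApprox f).2 ⟨b, hy⟩,
    (csInf_le' (show b ∈ {a | y ∈ lfpApprox f ⊥ a} from hy)).trans_lt hb⟩

end OrdinalApprox

namespace TGame

variable {Pos : Type} (G : TGame Pos)

open scoped Classical in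
def Forces (s : Bool) (good : Pos → Prop) (p : Pos) : Prop :=
  if G.Terminal p then G.winner p = s
  else if G.turn p = s then ∃ q, G.move p q ∧ good q
  else ∀ q, G.move p q → good q

variable {G} {s : Bool} {good good' : Pos → Prop} {p q : Pos}

theorem Forces.mono (h : G.Forces s good p) (hg : ∀ q, G.move p q → good q → good' q) :
    G.Forces s good' p := by
  unfold Forces at *
  split_ifs at *
  · exact h
  · obtain ⟨q, hq, hgq⟩ := h
    exact ⟨q, hq, hg q hq hgq⟩
  · exact fun q hq => hg q hq (h q hq)

theorem not_forces : ¬ G.Forces s good p ↔ G.Forces (!s) (fun q => ¬ good q) p := by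
  unfold Forces
  split_ifs <;> cases s <;> simp_all

theorem Forces.winner_eq (h : G.Forces s good p) (hT : G.Terminal p) : G.winner p = s := by
  rwa [Forces, if_pos hT] at h

theorem Forces.exists_move (h : G.Forces s good p) (ht : G.turn p = s) (hT : ¬ G.Terminal p) :
    ∃ q, G.move p q ∧ good q := by
  rwa [Forces, if_neg hT, if_pos ht] at h

theorem Forces.forall_move (h : G.Forces s good p) (ht : G.turn p ≠ s) (hq : G.move p q) :
    good q := by
  rw [Forces, if_neg (fun hT => hT q hq), if_neg ht] at h
  exact h q hq

variable (G)

theorem counter_eq_of_not_lt (hq : G.move p q) (h : ¬ G.counter q < G.counter p) :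
    G.counter q = G.counter p :=
  (G.counter_mono p q hq).antisymm (not_lt.1 h)

theorem seeker_eq_of_counter_eq (hq : G.move p q) (h : G.counter q = G.counter p) :
    G.seeker q = G.seeker p :=
  not_not.1 fun hne => (G.counter_swap p q hq hne).ne h

theorem exists_forall_ge_counter_eq {π : ℕ → Pos} (hπ : ∀ n, G.move (π n) (π (n + 1))) :
    ∃ N, ∀ n ≥ N, G.counter (π n) = G.counter (π N) := by
  have hanti : Antitone fun n => G.counter (π n) :=
    antitone_nat_of_succ_le fun n => G.counter_mono _ _ (hπ n)
  obtain ⟨N, hN⟩ := WellFoundedGT.monotone_chain_condition (α := ℕᵒᵈ)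
    ⟨fun n => OrderDual.toDual (G.counter (π n)), hanti⟩
  exact ⟨N, fun n hn => (hN n hn).symm⟩

theorem exists_forall_ge_seeker_eq {π : ℕ → Pos} (hπ : ∀ n, G.move (π n) (π (n + 1))) :
    ∃ s N, ∀ n ≥ N, G.seeker (π n) = s := by
  obtain ⟨N, hN⟩ := G.exists_forall_ge_counter_eq hπ
  refine ⟨G.seeker (π N), N, fun n hn => ?_⟩
  induction n, hn using Nat.le_induction with
  | base => rfl
  | succ n hn ih =>
    rw [G.seeker_eq_of_counter_eq (hπ n) ((hN _ (by omega)).trans (hN n hn).symm), ih]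

/-- The seeker's one-step attractor operator at level `c`. A move down to a lower level ends the
level game; `L` tells whether the seeker of the position reached there wins. -/
def levelOp (L : Pos → Prop) (c : ℕ) : Set Pos →o Set Pos where
  toFun X := {p | G.counter p = c ∧ G.Forces (G.seeker p)
    (fun q => if G.counter q < c then (L q ↔ G.seeker q = G.seeker p) else q ∈ X) p}
  monotone' X Y hXY p hp := ⟨hp.1, hp.2.mono fun q _ => by split_ifs; exacts [id, @hXY q]⟩

theorem levelOp_congr {L L' : Pos → Prop} {c : ℕ}
    (h : ∀ q, G.counter q < c → (L q ↔ L' q)) :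
    G.levelOp L c = G.levelOp L' c := by
  ext X p
  have hgood : (fun q => if G.counter q < c then (L q ↔ G.seeker q = G.seeker p) else q ∈ X) =
      (fun q => if G.counter q < c then (L' q ↔ G.seeker q = G.seeker p) else q ∈ X) :=
    funext fun q => by split_ifs with hq; exacts [propext (iff_congr (h q hq) Iff.rfl), rfl]
  change _ ∧ G.Forces _ _ p ↔ _ ∧ G.Forces _ _ p
  rw [hgood]

def seekerWin (c : ℕ) : Set Pos :=
  (G.levelOp (fun q => if _ : G.counter q < c then q ∈ seekerWin (G.counter q) else False) c).lfp
termination_by c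

def SeekerWins (p : Pos) : Prop := p ∈ G.seekerWin (G.counter p)

theorem seekerWin_eq_lfp (c : ℕ) : G.seekerWin c = (G.levelOp G.SeekerWins c).lfp := by
  rw [seekerWin]
  congr 1
  exact G.levelOp_congr fun q hq => by rw [dif_pos hq, SeekerWins]

noncomputable def rank (p : Pos) : Ordinal :=
  OrdinalApprox.lfpRank (G.levelOp G.SeekerWins (G.counter p)) p

theorem forces_of_seekerWins (h : G.SeekerWins p) :
    G.Forces (G.seeker p) (fun q => if G.counter q < G.counter p then
      (G.SeekerWins q ↔ G.seeker q = G.seeker p) else G.SeekerWins q ∧ G.rank q < G.rank p)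
      p := by
  rw [SeekerWins, seekerWin_eq_lfp] at h
  refine (OrdinalApprox.mem_apply_setOf_lfpRank_lt _ h).2.mono fun q hq hg => ?_
  split_ifs at hg ⊢ with hlt
  · exact hg
  · obtain ⟨hwin, hrank⟩ := hg
    have hc := G.counter_eq_of_not_lt hq hlt
    rw [SeekerWins, rank, hc, seekerWin_eq_lfp]
    exact ⟨hwin, hrank⟩

theorem seekerWins_of_forces (h : G.Forces (G.seeker p) (fun q => if G.counter q < G.counter p
      then (G.SeekerWins q ↔ G.seeker q = G.seeker p) else G.SeekerWins q) p) :
    G.SeekerWins p := by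
  rw [SeekerWins, seekerWin_eq_lfp, ← OrderHom.map_lfp]
  refine ⟨rfl, h.mono fun q hq hg => ?_⟩
  split_ifs at hg ⊢ with hlt
  · exact hg
  · rwa [← G.counter_eq_of_not_lt hq hlt, ← seekerWin_eq_lfp]

def winRegion (P : Bool) : Set Pos := {p | G.SeekerWins p ↔ G.seeker p = P}

theorem mem_winRegion_true_or_false (p : Pos) :
    p ∈ G.winRegion true ∨ p ∈ G.winRegion false := by
  by_cases h : G.SeekerWins p <;> cases hs : G.seeker p <;> simp [winRegion, h, hs]

/-- Plays made of such steps cannot keep `P` as seeker forever: the rank would descend forever. -/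
def Progress (P : Bool) (p q : Pos) : Prop :=
  q ∈ G.winRegion P ∧ (G.seeker p = P → G.counter q = G.counter p → G.rank q < G.rank p)

theorem forces_progress {P : Bool} (hp : p ∈ G.winRegion P) : G.Forces P (G.Progress P p) p := by
  by_cases hs : G.seeker p = P
  · subst hs
    refine (G.forces_of_seekerWins (hp.2 rfl)).mono fun q hq hg => ?_
    split_ifs at hg with hlt
    · exact ⟨hg, fun _ hc => absurd hc hlt.ne⟩
    · have hc := G.counter_eq_of_not_lt hq hlt
      exact ⟨iff_of_true hg.1 (G.seeker_eq_of_counter_eq hq hc), fun _ _ => hg.2⟩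
  · have hP : (!G.seeker p) = P := by revert hs; cases P <;> cases G.seeker p <;> decide
    have h := not_forces.1 (mt G.seekerWins_of_forces fun hw => hs (hp.1 hw))
    rw [hP] at h
    refine h.mono fun q hq hg => ⟨?_, fun h => absurd h hs⟩
    split_ifs at hg with hlt
    · show _ ↔ _
      rw [← hP, Bool.eq_not_iff]
      exact iff_not_comm.1 (not_iff.1 hg).symm
    · exact iff_of_false hg (by rwa [G.seeker_eq_of_counter_eq hq (G.counter_eq_of_not_lt hq hlt)])

theorem exists_strategy_progress (P : Bool) :
    ∃ σ : Pos → Pos, (∀ r, G.turn r = P → ¬ G.Terminal r → G.move r (σ r)) ∧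
      ∀ r q, r ∈ G.winRegion P → G.Follows σ P r q → G.Progress P r q := by
  have hmove : ∀ r, ∃ q, G.turn r = P → ¬ G.Terminal r →
      G.move r q ∧ (r ∈ G.winRegion P → G.Progress P r q) := by
    intro r
    by_cases hr : G.turn r = P ∧ ¬ G.Terminal r
    · by_cases hw : r ∈ G.winRegion P
      · obtain ⟨q, hq, hprog⟩ := (G.forces_progress hw).exists_move hr.1 hr.2
        exact ⟨q, fun _ _ => ⟨hq, fun _ => hprog⟩⟩
      · obtain ⟨q, hq⟩ := not_forall_not.1 hr.2
        exact ⟨q, fun _ _ => ⟨hq, fun h => absurd h hw⟩⟩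
    · exact ⟨r, fun h1 h2 => absurd ⟨h1, h2⟩ hr⟩
  choose σ hσ using hmove
  refine ⟨σ, fun r h1 h2 => (hσ r h1 h2).1, fun r q hr ⟨hq, hσq⟩ => ?_⟩
  by_cases ht : G.turn r = P
  · rw [hσq ht]
    exact (hσ r ht fun hT => hT q hq).2 hr
  · exact (G.forces_progress hr).forall_move ht hq

theorem winning_of_mem_winRegion {P : Bool} (hp : p ∈ G.winRegion P) : G.Winning P p := by
  obtain ⟨σ, hσ, hprog⟩ := G.exists_strategy_progress P
  refine ⟨σ, hσ, fun q hpq hT => ?_, ?_⟩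
  · have hq : q ∈ G.winRegion P := by
      clear hT
      induction hpq with
      | refl => exact hp
      | tail _ hstep ih => exact (hprog _ _ ih hstep).1
    exact (G.forces_progress hq).winner_eq hT
  · rintro π ⟨rfl, hπ⟩ s ⟨N₀, hN₀⟩ rfl
    have hmem : ∀ n, π n ∈ G.winRegion s := fun n => by
      induction n with
      | zero => exact hp
      | succ n ih => exact (hprog _ _ ih (hπ n)).1
    obtain ⟨N₁, hN₁⟩ := G.exists_forall_ge_counter_eq fun n => (hπ n).1
    obtain ⟨n, hn⟩ := WellFounded.not_rel_apply_succ (r := (· < ·))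
      fun n => G.rank (π (max N₀ N₁ + n))
    have hstep := hprog _ _ (hmem (max N₀ N₁ + n)) (hπ (max N₀ N₁ + n))
    refine hn (hstep.2 (hN₀ _ (by omega)) ?_)
    rw [hN₁ _ (by omega), hN₁ (max N₀ N₁ + n) (by omega)]

theorem follows_ite {σ τ : Pos → Pos} {r : Pos}
    (hσ : ∀ r, G.turn r = true → ¬ G.Terminal r → G.move r (σ r))
    (hτ : ∀ r, G.turn r = false → ¬ G.Terminal r → G.move r (τ r)) (hr : ¬ G.Terminal r) :
    G.Follows σ true r (if G.turn r then σ r else τ r) ∧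
      G.Follows τ false r (if G.turn r then σ r else τ r) := by
  cases ht : G.turn r <;> simp [Follows, ht, hσ, hτ, hr]

theorem not_winning_true_and_false (hσ : G.Winning true p) (hτ : G.Winning false p) : False := by
  obtain ⟨σ, hσ, hσT, hσI⟩ := hσ
  obtain ⟨τ, hτ, hτT, hτI⟩ := hτ
  set next : Pos → Pos := fun r => if G.turn r then σ r else τ r
  have hstep : ∀ r, Relation.ReflTransGen (G.Follows σ true) p r →
      Relation.ReflTransGen (G.Follows τ false) p r →
      G.Follows σ true r (next r) ∧ G.Follows τ false r (next r) := fun r h₁ h₂ =>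
    G.follows_ite hσ hτ fun hT =>
      absurd ((hσT r h₁ hT).symm.trans (hτT r h₂ hT)) Bool.true_eq_false.mp
  have hreach : ∀ n, Relation.ReflTransGen (G.Follows σ true) p (next^[n] p) ∧
      Relation.ReflTransGen (G.Follows τ false) p (next^[n] p) := fun n => by
    induction n with
    | zero => exact ⟨.refl, .refl⟩
    | succ n ih =>
      rw [Function.iterate_succ_apply']
      exact ⟨ih.1.tail (hstep _ ih.1 ih.2).1, ih.2.tail (hstep _ ih.1 ih.2).2⟩
  have hplay : ∀ n, G.Follows σ true (next^[n] p) (next^[n + 1] p) ∧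
      G.Follows τ false (next^[n] p) (next^[n + 1] p) := fun n => by
    rw [Function.iterate_succ_apply']
    exact hstep _ (hreach n).1 (hreach n).2
  obtain ⟨s, N, hs⟩ := G.exists_forall_ge_seeker_eq fun n => (hplay n).1.1
  cases s
  · exact hτI _ ⟨rfl, fun n => (hplay n).2⟩ false ⟨N, hs⟩ rfl
  · exact hσI _ ⟨rfl, fun n => (hplay n).1⟩ true ⟨N, hs⟩ rfl

end TGame

/-- A game whose plays are infinite only through a suffix in
which a single fixed player remains seeker forever (and then loses) is
determined: from every position exactly one player has a winning strategy. -/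
theorem tgame_determinacy {Pos : Type} (G : TGame Pos) (p : Pos) :
    Xor' (G.Winning true p) (G.Winning false p) := by
  rcases G.mem_winRegion_true_or_false p with h | h
  · have hw := G.winning_of_mem_winRegion h
    exact Or.inl ⟨hw, G.not_winning_true_and_false hw⟩
  · have hw := G.winning_of_mem_winRegion h
    exact Or.inr ⟨hw, fun ht => G.not_winning_true_and_false ht hw⟩
end
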